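/- arXiv:2202.12125 — 3 statements merged into one kernel-verified Lean document; each statement's English description precedes it below -/
import Mathlib

section
/- Let k ≥ 3 be a natural number and let x ∈ (0, 1/2]. Then H(x,k) < 0. -/
open Real

/-- H(x,k) = -(1-x)²·3^{2k} + (1+x)(3-2x)^{2k} - (1+x)(3-x) + (3-x)(1-2x)^{2k} -/
noncomputable def H (x : ℝ) (k : ℕ) : ℝ :=
  -(1 - x)^2 * 3^(2*k) + (1 + x) * (3 - 2*x)^(2*k) - (1 + x) * (3 - x)
    + (3 - x) * (1 - 2*x)^(2*k)

theorem H_neg (k : ℕ) (hk : 3 ≤ k) (x : ℝ) (hx : x ∈ Set.Ioc (0 : ℝ) (1/2)) :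
    H x k < 0 := by
  obtain ⟨hx0, hx2⟩ := hx
  have h1x : 0 ≤ 1 - x := by linarith
  have h1x1 : 1 - x ≤ 1 := by linarith
  have h9 : (0:ℝ) < 9 ^ k := by positivity
  have hA : (3 - 2*x) ^ (2*k) ≤ 9 ^ k * (1 - x) ^ k := by
    rw [pow_mul]
    calc ((3 - 2*x) ^ 2) ^ k ≤ (9 * (1 - x)) ^ k := by
          apply pow_le_pow_left₀ (by positivity) (by nlinarith)
      _ = 9 ^ k * (1 - x) ^ k := mul_pow _ _ k
  have hk1 : (1 - x) ^ k = (1 - x) * (1 - x) ^ (k - 1) := by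
    rw [← pow_succ']; congr 1; omega
  have hB : (1 + x) * (1 - x) ^ k ≤ (1 - x) ^ 2 := by
    rw [hk1]
    calc (1 + x) * ((1 - x) * (1 - x) ^ (k - 1)) ≤ 1 * (1 - x) ^ (k - 1) := by
          nlinarith [pow_nonneg h1x (k - 1), mul_nonneg (mul_nonneg hx0.le hx0.le) (pow_nonneg h1x (k - 1))]
      _ = (1 - x) ^ (k - 1) := one_mul _
      _ ≤ (1 - x) ^ 2 := pow_le_pow_of_le_one h1x h1x1 (by omega)
  have hC : (1 - 2*x) ^ (2*k) ≤ 1 := by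
    rw [pow_mul]
    exact pow_le_one₀ (by positivity) (by nlinarith)
  have h3 : (3:ℝ) ^ (2*k) = 9 ^ k := by
    rw [pow_mul]; norm_num
  have hfin : (1 + x) * (3 - 2*x) ^ (2*k) ≤ (1 - x) ^ 2 * 9 ^ k := by
    calc (1 + x) * (3 - 2*x) ^ (2*k) ≤ (1 + x) * (9 ^ k * (1 - x) ^ k) := by nlinarith
      _ = 9 ^ k * ((1 + x) * (1 - x) ^ k) := by ring
      _ ≤ 9 ^ k * (1 - x) ^ 2 := by nlinarith
      _ = (1 - x) ^ 2 * 9 ^ k := by ring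
  unfold H
  rw [h3]
  nlinarith [hfin, hC]
end

section
/- Let k ≥ 3 be a natural number and let x ∈ (0, 1/2]. Then |H(x,k)| > (1/(3k^2))·|H(x,k+1)|. -/
open Real

/-- The key recurrence identity. -/
lemma H_rec (x : ℝ) (m : ℕ) :
    H x (m+1) = (3-2*x)^2 * H x m
      - 4*(1-x)*(3-x)*(x*(1-x)*3^(2*m) - (1+x)*(2-x) + 2*(1-2*x)^(2*m)) := by
  unfold H
  have h2 : 2*(m+1) = 2*m + 2 := by ring
  rw [h2, pow_add, pow_add, pow_add]
  ring

lemma bern (x : ℝ) (m : ℕ) (hx0 : 0 < x) (hx1 : x ≤ 1/2) :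
    (1:ℝ) + m*(4*x^2-4*x) ≤ (1-2*x)^(2*m) := by
  have h := one_add_mul_le_pow (show (-2:ℝ) ≤ 4*x^2-4*x by nlinarith) m
  calc (1:ℝ) + m*(4*x^2-4*x) ≤ (1+(4*x^2-4*x))^m := h
    _ = ((1-2*x)^2)^m := by congr 1; ring
    _ = (1-2*x)^(2*m) := by rw [← pow_mul]

lemma pow9 (m : ℕ) : (1:ℝ) + m*8 ≤ 3^(2*m) := by
  have h := one_add_mul_le_pow (show (-2:ℝ) ≤ 8 by norm_num) m
  calc (1:ℝ) + m*8 ≤ (1+8)^m := h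
    _ = (3^2)^m := by norm_num
    _ = 3^(2*m) := by rw [← pow_mul]

lemma pow9' (m : ℕ) (hm : 2 ≤ m) : (1:ℝ) + 12*m ≤ 3^(2*m) := by
  induction m with
  | zero => omega
  | succ n ih =>
    rcases Nat.lt_or_ge n 2 with h | h
    · interval_cases n
      · omega
      · norm_num
    · have h1 := ih h
      have h2 : (3:ℝ)^(2*(n+1)) = 9 * 3^(2*n) := by
        rw [show 2*(n+1) = 2*n + 2 by ring, pow_add]; ring
      rw [h2]
      have hn2 : (2:ℝ) ≤ (n:ℝ) := by exact_mod_cast h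
      push_cast
      nlinarith [h1]

lemma B_nonneg (x : ℝ) (m : ℕ) (hx0 : 0 < x) (hx1 : x ≤ 1/2) :
    0 ≤ x*(1-x)*3^(2*m) - (1+x)*(2-x) + 2*(1-2*x)^(2*m) := by
  have h1 := bern x m hx0 hx1
  have h9 := pow9 m
  have hu : 0 ≤ x*(1-x) := by nlinarith
  have hp : 0 ≤ x*(1-x) * (3^(2*m) - (1 + m*8)) := by
    apply mul_nonneg hu; linarith
  nlinarith [h1, hp]

lemma C_nonneg (x : ℝ) (m : ℕ) (hm : 3 ≤ m) (hx0 : 0 < x) (hx1 : x ≤ 1/2) :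
    0 ≤ 27*(x*(1-x)*3^(2*m) - (1+x)*(2-x) + 2*(1-2*x)^(2*m))
      - (x*(1-x)*3^(2*(m+1)) - (1+x)*(2-x) + 2*(1-2*x)^(2*(m+1))) := by
  have h1 := bern x m hx0 hx1
  have h9 := pow9' m (by omega)
  have hu : 0 ≤ x*(1-x) := by nlinarith
  have hu4 : x*(1-x) ≤ 1/4 := by nlinarith
  have hm0 : (0:ℝ) ≤ m := Nat.cast_nonneg m
  have e9 : (3:ℝ)^(2*(m+1)) = 9 * 3^(2*m) := by
    rw [show 2*(m+1) = 2*m + 2 by ring, pow_add]; ring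
  have eQ : (1-2*x)^(2*(m+1)) = (1-2*x)^(2*m) * (1-2*x)^2 := by
    rw [show 2*(m+1) = 2*m + 2 by ring, pow_add]
  rw [e9, eQ]
  have hcpos : (0:ℝ) ≤ 52 + 8*(x*(1-x)) := by nlinarith
  have hc : (52 + 8*(x*(1-x))) * (1 + m*(4*x^2-4*x))
      ≤ (52 + 8*(x*(1-x))) * (1-2*x)^(2*m) :=
    mul_le_mul_of_nonneg_left h1 hcpos
  have hp : 0 ≤ x*(1-x) * (3^(2*m) - (1 + 12*m)) := by
    apply mul_nonneg hu; linarith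
  have hq : 0 ≤ (m:ℝ) * (x*(1-x)) * (1/4 - x*(1-x)) := by
    apply mul_nonneg (mul_nonneg hm0 hu); linarith
  nlinarith [hc, hp, hq]

lemma H_neg_s2 (x : ℝ) (hx0 : 0 < x) (hx1 : x ≤ 1/2) :
    ∀ m : ℕ, 3 ≤ m → H x m < 0 := by
  intro m hm
  induction m, hm using Nat.le_induction with
  | base =>
    unfold H
    norm_num
    nlinarith [mul_pos hx0 (show (0:ℝ) < 6 - 11*x by linarith),
      mul_nonneg (pow_nonneg hx0.le 4) (show (0:ℝ) ≤ 10 - 6*x + x^2 by nlinarith)]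
  | succ n hn ih =>
    rw [H_rec]
    have hA : (0:ℝ) < (3-2*x)^2 := by nlinarith
    have hc : (0:ℝ) ≤ 4*(1-x)*(3-x) := by nlinarith
    have hB := B_nonneg x n hx0 hx1
    nlinarith [mul_pos hA (neg_pos.mpr ih), mul_nonneg hc hB]

lemma H_gap (x : ℝ) (hx0 : 0 < x) (hx1 : x ≤ 1/2) :
    ∀ m : ℕ, 3 ≤ m → 0 < H x (m+1) - 27 * H x m := by
  intro m hm
  induction m, hm using Nat.le_induction with
  | base =>
    unfold H
    norm_num
    nlinarith [mul_pos hx0 (show (0:ℝ) < 42 + 19*x - 224*x^2 + 115*x^3 by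
        nlinarith [sq_nonneg (x-1/2),
          mul_nonneg (mul_nonneg hx0.le hx0.le) (show (0:ℝ) ≤ 1/2-x+1 by linarith),
          mul_nonneg (mul_nonneg hx0.le hx0.le) (show (0:ℝ) ≤ 1/2-x by linarith)]),
      mul_nonneg (pow_nonneg hx0.le 3) (show (0:ℝ) ≤ 43 + 118*x - 169*x^2 + 64*x^3 - 8*x^4 by
        nlinarith [pow_nonneg hx0.le 3, sq_nonneg x]),
      mul_nonneg (pow_nonneg hx0.le 5) (show (0:ℝ) ≤ 1/2 - x + 1 by linarith)]
  | succ n hn ih =>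
    have hrec1 := H_rec x (n+1)
    have hrec2 := H_rec x n
    have hA : (0:ℝ) < (3-2*x)^2 := by nlinarith
    have hc : (0:ℝ) ≤ 4*(1-x)*(3-x) := by nlinarith
    have hC := C_nonneg x n hn hx0 hx1
    nlinarith [mul_pos hA ih, mul_nonneg hc hC]

theorem abs_H_gt_strong (k : ℕ) (hk : 3 ≤ k) (x : ℝ) (hx : x ∈ Set.Ioc (0 : ℝ) (1/2)) :
    |H x k| > (1 / (3 * (k:ℝ)^2)) * |H x (k+1)| := by
  obtain ⟨hx0, hx1⟩ := hx
  have hHk := H_neg_s2 x hx0 hx1 k hk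
  have hHk1 := H_neg_s2 x hx0 hx1 (k+1) (by omega)
  have hgap := H_gap x hx0 hx1 k hk
  rw [abs_of_neg hHk, abs_of_neg hHk1]
  have hk3 : (3:ℝ) ≤ (k:ℝ) := by exact_mod_cast hk
  have hk2 : (27:ℝ) ≤ 3*(k:ℝ)^2 := by nlinarith
  have h3k : (0:ℝ) < 3*(k:ℝ)^2 := by positivity
  have key : -H x (k+1) < 3*(k:ℝ)^2 * (-H x k) := by
    nlinarith [mul_nonneg (by linarith : (0:ℝ) ≤ 3*(k:ℝ)^2 - 27) (by linarith : (0:ℝ) ≤ -H x k)]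
  calc (1 / (3 * (k:ℝ)^2)) * (-H x (k+1))
      < (1 / (3 * (k:ℝ)^2)) * (3*(k:ℝ)^2 * (-H x k)) := by
        apply mul_lt_mul_of_pos_left key (by positivity)
    _ = -H x k := by field_simp
end

section
/- Let T ≥ 1 be a natural number and let a, b be real numbers such that the complex polynomial map F(z) = z + a·z^{T+1} + b·z^{2T+1} is injective on the open unit disk {z ∈ ℂ : |z| < 1}. Then |a| ≤ 2(1+T)/(1+2T)·sin(π/(2+2T)) and |b| ≤ 1/(1+2T). -/
/-!
An injective holomorphic function has nonvanishing derivative: near a critical point `z₀`,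
`f = f z₀ + φ ^ n` with `n ≥ 2`, `φ z₀ = 0` and `φ' z₀ ≠ 0`, so `f` takes the same value at
preimages under `φ` of small `w` and `ζ w`, `ζ` a primitive `n`-th root of unity.
Here `F'(z) = 1 + a (T + 1) w + b (2T + 1) w²` with `w = z ^ T`; if `|b| (2T + 1) > 1` the two roots
in `w` have product of modulus `< 1`, which gives a critical point in the disk.

Since `F` has real coefficients, injectivity forces `F z` to be non-real off the real axis. Hence
`Im F(r e^{iθ}) / r` has no zero for `0 < r < 1`, `0 < θ < π`, and is positive at `r = 0`, so
`sin θ + a sin ((T + 1) θ) + b sin ((2T + 1) θ) ≥ 0`. At `θ = π / (2T + 2)` this is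
`-a ≤ (1 + b) sin θ`, and the rotation `z ↦ e^{iπ/T} z` turns `a` into `-a`.
-/

open Real Filter Metric Set Topology ComplexConjugate

theorem AnalyticAt.exists_pow_eq {g : ℂ → ℂ} {z₀ : ℂ} (hg : AnalyticAt ℂ g z₀)
    (hg₀ : g z₀ ≠ 0) {n : ℕ} (hn : n ≠ 0) :
    ∃ h : ℂ → ℂ, AnalyticAt ℂ h z₀ ∧ h z₀ ≠ 0 ∧ ∀ z, g z = h z ^ n := by
  obtain ⟨c, hc⟩ := IsAlgClosed.exists_pow_nat_eq (g z₀) (Nat.pos_of_ne_zero hn)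
  have hc₀ : c ≠ 0 := by rintro rfl; exact hg₀ (by simp [← hc, hn])
  refine ⟨fun z => c * (g z / g z₀) ^ (n⁻¹ : ℂ), ?_, ?_, fun z => ?_⟩
  · refine analyticAt_const.mul ((hg.div analyticAt_const hg₀).cpow analyticAt_const ?_)
    simp [div_self hg₀]
  · simpa [div_self hg₀] using hc₀
  · rw [mul_pow, Complex.cpow_nat_inv_pow _ hn, hc, mul_div_cancel₀ _ hg₀]

theorem AnalyticAt.exists_eventuallyEq_add_pow {f : ℂ → ℂ} {z₀ : ℂ} (hf : AnalyticAt ℂ f z₀)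
    (hf' : deriv f z₀ = 0) (hfc : ¬∀ᶠ z in 𝓝 z₀, f z = f z₀) :
    ∃ n, 2 ≤ n ∧ ∃ φ : ℂ → ℂ, map φ (𝓝 z₀) = 𝓝 0 ∧ ∀ᶠ z in 𝓝 z₀, f z = f z₀ + φ z ^ n := by
  have hF : AnalyticAt ℂ (fun z => f z - f z₀) z₀ := hf.sub analyticAt_const
  obtain ⟨n, g, hg, hg₀, hfg⟩ := hF.exists_eventuallyEq_pow_smul_nonzero_iff.mpr
    (by simpa only [sub_eq_zero] using hfc)
  simp only [smul_eq_mul, sub_eq_iff_eq_add'] at hfg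
  have hn : 2 ≤ n := by
    by_contra! hn
    interval_cases n
    · exact hg₀ (by simpa using hfg.self_of_nhds)
    · have hderiv : HasDerivAt (fun z => f z₀ + (z - z₀) ^ 1 * g z) (g z₀) z₀ := by
        simpa using (((hasDerivAt_id z₀).sub_const z₀).fun_mul
          hg.differentiableAt.hasDerivAt).const_add (f z₀)
      exact hg₀ (hderiv.deriv ▸ EventuallyEq.deriv_eq hfg ▸ hf')
  obtain ⟨h, hh, hh₀, hgh⟩ := hg.exists_pow_eq hg₀ (n := n) (by omega)
  refine ⟨n, hn, fun z => (z - z₀) * h z, ?_, ?_⟩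
  · have hφ : HasStrictDerivAt (fun z => (z - z₀) * h z) (h z₀) z₀ := by
      simpa using ((hasStrictDerivAt_id z₀).sub (hasStrictDerivAt_const z₀ z₀)).fun_mul
        hh.hasStrictDerivAt
    simpa using hφ.map_nhds_eq hh₀
  · filter_upwards [hfg] with z hz
    rw [hz, mul_pow, ← hgh]

theorem exists_ne_pow_eq_pow_of_le_map {φ : ℂ → ℂ} {z₀ : ℂ} {n : ℕ} (hn : 2 ≤ n)
    (hφ : 𝓝 0 ≤ map φ (𝓝 z₀)) {V : Set ℂ} (hV : V ∈ 𝓝 z₀) :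
    ∃ x ∈ V, ∃ y ∈ V, x ≠ y ∧ φ x ^ n = φ y ^ n := by
  have hζ := Complex.isPrimitiveRoot_exp n (by omega)
  set ζ := Complex.exp (2 * π * Complex.I / n)
  have himage : ∀ᶠ w in 𝓝 (0 : ℂ), w ∈ φ '' V := hφ (image_mem_map hV)
  have hrot : ∀ᶠ w in 𝓝 (0 : ℂ), ζ * w ∈ φ '' V :=
    ((continuous_const_mul ζ).tendsto' 0 0 (mul_zero ζ)).eventually himage
  obtain ⟨w, ⟨⟨x, hx, rfl⟩, ⟨y, hy, hxy⟩⟩, hw⟩ :=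
    ((himage.and hrot).filter_mono nhdsWithin_le_nhds).and
      (self_mem_nhdsWithin (s := {0}ᶜ)) |>.exists
  refine ⟨x, hx, y, hy, ?_, by rw [hxy, mul_pow, hζ.pow_eq_one, one_mul]⟩
  rintro rfl
  exact hζ.ne_one hn (mul_right_cancel₀ hw (by simpa using hxy.symm))

theorem AnalyticAt.deriv_ne_zero_of_injOn {f : ℂ → ℂ} {z₀ : ℂ} {U : Set ℂ}
    (hf : AnalyticAt ℂ f z₀) (hU : U ∈ 𝓝 z₀) (hinj : InjOn f U) : deriv f z₀ ≠ 0 := by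
  intro hf'
  have hfc : ¬∀ᶠ z in 𝓝 z₀, f z = f z₀ := by
    intro hc
    obtain ⟨z, hz, hne⟩ := ((hc.and hU).filter_mono nhdsWithin_le_nhds).and
      (self_mem_nhdsWithin (s := {z₀}ᶜ)) |>.exists
    exact hne (hinj hz.2 (mem_of_mem_nhds hU) hz.1)
  obtain ⟨n, hn, φ, hφ, hfφ⟩ := hf.exists_eventuallyEq_add_pow hf' hfc
  obtain ⟨x, hx, y, hy, hxy, hφxy⟩ := exists_ne_pow_eq_pow_of_le_map hn hφ.ge (inter_mem hU hfφ)
  exact hxy (hinj hx.1 hy.1 (by rw [hx.2, hy.2, hφxy]))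

theorem exists_norm_lt_one_quadratic_eq_zero (A B : ℂ) (hB : 1 < ‖B‖) :
    ∃ w : ℂ, ‖w‖ < 1 ∧ 1 + A * w + B * w ^ 2 = 0 := by
  have hB₀ : B ≠ 0 := norm_pos_iff.mp (one_pos.trans hB)
  obtain ⟨s, hs⟩ := IsAlgClosed.exists_pow_nat_eq (A ^ 2 - 4 * B) two_pos
  have hroot : ∀ t : ℂ, t ^ 2 = A ^ 2 - 4 * B →
      1 + A * ((-A + t) / (2 * B)) + B * ((-A + t) / (2 * B)) ^ 2 = 0 := by
    intro t ht
    field_simp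
    linear_combination ht
  have hprod : (-A + s) / (2 * B) * ((-A + -s) / (2 * B)) = 1 / B := by
    field_simp
    linear_combination -hs
  by_contra! hlarge
  have h₁ : 1 ≤ ‖(-A + s) / (2 * B)‖ := not_lt.mp fun h => hlarge _ h (hroot s hs)
  have h₂ : 1 ≤ ‖(-A + -s) / (2 * B)‖ :=
    not_lt.mp fun h => hlarge _ h (hroot (-s) (by rw [neg_sq, hs]))
  have : 1 ≤ ‖1 / B‖ := by
    simpa only [← norm_mul, hprod] using one_le_mul_of_one_le_of_one_le h₁ h₂
  rw [norm_div, norm_one, le_div_iff₀ (one_pos.trans hB), one_mul] at this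
  linarith

theorem im_ofReal_mul_exp_pow (r θ : ℝ) (n : ℕ) :
    (((r : ℂ) * Complex.exp (θ * Complex.I)) ^ n).im = r ^ n * sin (n * θ) := by
  rw [mul_pow, ← Complex.exp_nat_mul, ← mul_assoc, ← Complex.ofReal_pow, ← Complex.ofReal_natCast,
    ← Complex.ofReal_mul, Complex.im_ofReal_mul, Complex.exp_ofReal_mul_I_im]

theorem im_eq_zero_of_injOn_of_map_conj {f : ℂ → ℂ} {r : ℝ} (hconj : ∀ z, f (conj z) = conj (f z))
    (hinj : InjOn f (ball 0 r)) {z : ℂ} (hz : z ∈ ball 0 r) (hfz : (f z).im = 0) : z.im = 0 := by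
  have hz' : conj z ∈ ball 0 r := by simpa using hz
  refine Complex.conj_eq_iff_im.mp (hinj hz' hz ?_)
  rw [hconj, Complex.conj_eq_iff_im.mpr hfz]

theorem ContinuousOn.nonneg_of_pos_of_forall_ne_zero {f : ℝ → ℝ} {a b : ℝ} (hab : a ≤ b)
    (hf : ContinuousOn f (Icc a b)) (ha : 0 < f a) (hne : ∀ x ∈ Ioo a b, f x ≠ 0) :
    0 ≤ f b := by
  by_contra! hb
  obtain ⟨c, hc, hfc⟩ := intermediate_value_Icc' hab hf ⟨hb.le, ha.le⟩
  have hca : c ≠ a := by rintro rfl; exact ha.ne' hfc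
  have hcb : c ≠ b := by rintro rfl; exact hb.ne hfc
  exact hne c ⟨lt_of_le_of_ne hc.1 hca.symm, lt_of_le_of_ne hc.2 hcb⟩ hfc

noncomputable def trinomial (T : ℕ) (a b : ℝ) (z : ℂ) : ℂ :=
  z + a * z ^ (T + 1) + b * z ^ (2 * T + 1)

section Trinomial

variable {T : ℕ} {a b : ℝ}

theorem hasDerivAt_trinomial (z : ℂ) :
    HasDerivAt (trinomial T a b) (1 + a * (T + 1) * z ^ T + b * (2 * T + 1) * z ^ (2 * T)) z := by
  refine (((hasDerivAt_id' z).fun_add ((hasDerivAt_pow (T + 1) z).const_mul (a : ℂ))).fun_add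
    ((hasDerivAt_pow (2 * T + 1) z).const_mul (b : ℂ))).congr_deriv ?_
  push_cast
  ring

theorem trinomial_conj (z : ℂ) : trinomial T a b (conj z) = conj (trinomial T a b z) := by
  simp [trinomial]

theorem abs_b_le_of_injOn_trinomial (hT : 1 ≤ T) (hinj : InjOn (trinomial T a b) (ball 0 1)) :
    |b| ≤ 1 / (1 + 2 * T) := by
  by_contra! hb
  have hB : 1 < ‖((b * (1 + 2 * T) : ℝ) : ℂ)‖ := by
    rwa [Complex.norm_real, Real.norm_eq_abs, abs_mul,
      abs_of_pos (by positivity : (0 : ℝ) < 1 + 2 * T), ← div_lt_iff₀ (by positivity)]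
  obtain ⟨w, hw, hw₀⟩ := exists_norm_lt_one_quadratic_eq_zero (a * (T + 1)) _ hB
  obtain ⟨z, rfl⟩ := IsAlgClosed.exists_pow_nat_eq w hT
  have hz : z ∈ ball (0 : ℂ) 1 := by
    rw [norm_pow, pow_lt_one_iff_of_nonneg (norm_nonneg z) (by omega)] at hw
    rwa [mem_ball_zero_iff]
  have hderiv : deriv (trinomial T a b) z = 0 := by
    rw [(hasDerivAt_trinomial z).deriv, ← hw₀]
    push_cast
    ring
  have hF : AnalyticAt ℂ (trinomial T a b) z :=
    Differentiable.analyticAt (fun z => (hasDerivAt_trinomial z).differentiableAt) z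
  exact hF.deriv_ne_zero_of_injOn (isOpen_ball.mem_nhds hz) hinj hderiv

theorem sin_combination_nonneg_of_injOn_trinomial (hT : 1 ≤ T)
    (hinj : InjOn (trinomial T a b) (ball 0 1)) {θ : ℝ} (hθ₀ : 0 < θ) (hθ : θ < π) :
    0 ≤ sin θ + a * sin ((T + 1) * θ) + b * sin ((2 * T + 1) * θ) := by
  set ψ : ℝ → ℝ := fun r =>
    sin θ + a * r ^ T * sin ((T + 1) * θ) + b * r ^ (2 * T) * sin ((2 * T + 1) * θ)
  have hsin : 0 < sin θ := sin_pos_of_pos_of_lt_pi hθ₀ hθ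
  have hψ : ∀ r ∈ Ioo (0 : ℝ) 1, ψ r ≠ 0 := by
    intro r hr hψr
    have hz : (r : ℂ) * Complex.exp (θ * Complex.I) ∈ ball (0 : ℂ) 1 := by
      simpa [abs_of_pos hr.1] using hr.2
    have him : (trinomial T a b (r * Complex.exp (θ * Complex.I))).im = r * ψ r := by
      simp only [trinomial, Complex.add_im, Complex.im_ofReal_mul, im_ofReal_mul_exp_pow,
        Complex.exp_ofReal_mul_I_im, ψ]
      push_cast
      ring
    have := im_eq_zero_of_injOn_of_map_conj trinomial_conj hinj hz (by rw [him, hψr, mul_zero])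
    rw [Complex.im_ofReal_mul, Complex.exp_ofReal_mul_I_im] at this
    exact (mul_pos hr.1 hsin).ne' this
  have hψ₀ : ψ 0 = sin θ := by
    simp [ψ, zero_pow (by omega : T ≠ 0), zero_pow (by omega : 2 * T ≠ 0)]
  simpa [ψ] using (by fun_prop : Continuous ψ).continuousOn.nonneg_of_pos_of_forall_ne_zero
    zero_le_one (hψ₀ ▸ hsin) hψ

theorem injOn_trinomial_neg (hT : 1 ≤ T) (hinj : InjOn (trinomial T a b) (ball 0 1)) :
    InjOn (trinomial T (-a) b) (ball 0 1) := by
  set ε := Complex.exp (↑(π / T) * Complex.I)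
  have hT₀ : (T : ℂ) ≠ 0 := by exact_mod_cast (by omega : T ≠ 0)
  have hεT : ε ^ T = -1 := by
    rw [← Complex.exp_nat_mul, ← Complex.exp_pi_mul_I]
    congr 1
    push_cast
    field_simp
  have hε : ‖ε‖ = 1 := Complex.norm_exp_ofReal_mul_I _
  have hrot : ∀ z, trinomial T a b (ε * z) = ε * trinomial T (-a) b z := by
    intro z
    simp only [trinomial, mul_pow, pow_succ, pow_mul, hεT]
    push_cast
    ring
  have hmaps : ∀ z ∈ ball (0 : ℂ) 1, ε * z ∈ ball (0 : ℂ) 1 := by simp [hε]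
  intro z hz w hw hzw
  refine mul_left_cancel₀ (norm_ne_zero_iff.mp (hε ▸ one_ne_zero))
    (hinj (hmaps z hz) (hmaps w hw) ?_)
  rw [hrot, hrot, hzw]

theorem abs_a_le_of_injOn_trinomial (hT : 1 ≤ T) (hinj : InjOn (trinomial T a b) (ball 0 1)) :
    |a| ≤ (1 + b) * sin (π / (2 + 2 * T)) := by
  set β := π / (2 + 2 * T)
  have hβ₀ : 0 < β := by positivity
  have hβπ : β < π :=
    div_lt_self pi_pos (by linarith [(Nat.one_le_cast (α := ℝ)).mpr hT])
  have hβ : β * (2 + 2 * T) = π := div_mul_cancel₀ _ (by positivity)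
  have h₁ : sin ((T + 1) * β) = 1 := by
    rw [show (T + 1) * β = π / 2 by linear_combination hβ / 2, sin_pi_div_two]
  have h₂ : sin ((2 * T + 1) * β) = sin β := by
    rw [show (2 * T + 1) * β = π - β by linear_combination hβ, sin_pi_sub]
  have key : ∀ a' : ℝ, InjOn (trinomial T a' b) (ball 0 1) → -a' ≤ (1 + b) * sin β := by
    intro a' ha'
    have := sin_combination_nonneg_of_injOn_trinomial hT ha' hβ₀ hβπ
    rw [h₁, h₂] at this
    linarith
  exact abs_le.mpr
    ⟨by linarith [key a hinj], by simpa using key (-a) (injOn_trinomial_neg hT hinj)⟩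

end Trinomial

theorem coeff_bounds_of_injOn (T : ℕ) (hT : 1 ≤ T) (a b : ℝ)
    (hinj : Set.InjOn (fun z : ℂ => z + (a : ℂ) * z^(T+1) + (b : ℂ) * z^(2*T+1))
      (Metric.ball (0 : ℂ) 1)) :
    |a| ≤ 2 * (1 + (T:ℝ)) / (1 + 2*(T:ℝ)) * Real.sin (π / (2 + 2*(T:ℝ))) ∧
    |b| ≤ 1 / (1 + 2*(T:ℝ)) := by
  have hF : InjOn (trinomial T a b) (ball 0 1) := hinj
  have hb := abs_b_le_of_injOn_trinomial hT hF
  refine ⟨?_, hb⟩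
  calc |a| ≤ (1 + b) * sin (π / (2 + 2 * T)) := abs_a_le_of_injOn_trinomial hT hF
    _ ≤ (1 + 1 / (1 + 2 * T)) * sin (π / (2 + 2 * T)) := by
      have hsin : 0 ≤ sin (π / (2 + 2 * T)) :=
        sin_nonneg_of_nonneg_of_le_pi (by positivity)
          (div_le_self pi_pos.le (by linarith [(Nat.cast_nonneg (α := ℝ) T)]))
      have hb' : b ≤ 1 / (1 + 2 * T) := (le_abs_self b).trans hb
      gcongr
    _ = 2 * (1 + T) / (1 + 2 * T) * sin (π / (2 + 2 * T)) := by
      congr 1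
      field_simp
      ring
end
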